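/- arXiv:2604.01355 — 3 statements merged into one kernel-verified Lean document; each statement's English description precedes it below -/
import Mathlib

section
/- If e : ℝ → ℝ is differentiable and satisfies e'(t) + K_p * e(t) = d(t) for all t ≥ 0, where K_p > 0 and |d(t)| ≤ ε for all t, then limsup_{t→∞} |e(t)| ≤ ε / K_p. -/
open Real Filter Topology

/-!
Along a solution of `e' + K_p e = d` with `|d| ≤ ε`, both `e` and `-e` satisfy the differential
inequality `y' ≤ -K_p y + ε`, so Grönwall's inequality bounds `|e t|` by
`|e 0| exp (-K_p t) + (ε / K_p) (1 - exp (-K_p t))`, which tends to `ε / K_p`.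
-/

theorem le_gronwallBound_of_deriv_le {f : ℝ → ℝ} {δ K ε a : ℝ} (hf : Differentiable ℝ f)
    (ha : f a ≤ δ) (bound : ∀ x, a ≤ x → deriv f x ≤ K * f x + ε) {x : ℝ} (hx : a ≤ x) :
    f x ≤ gronwallBound δ K ε (x - a) :=
  le_gronwallBound_of_liminf_deriv_right_le (b := x) hf.continuous.continuousOn
    (fun y _ _ hr => (hf y).hasDerivAt.hasDerivWithinAt.liminf_right_slope_le hr) ha
    (fun y hy => bound y hy.1) x ⟨hx, le_rfl⟩

theorem abs_le_gronwallBound_of_abs_deriv_sub_le {f : ℝ → ℝ} {K ε a : ℝ}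
    (hf : Differentiable ℝ f) (bound : ∀ x, a ≤ x → |deriv f x - K * f x| ≤ ε) {x : ℝ}
    (hx : a ≤ x) : |f x| ≤ gronwallBound |f a| K ε (x - a) := by
  have hf_le := le_gronwallBound_of_deriv_le (K := K) (ε := ε) hf (le_abs_self (f a))
    (fun y hy => by linarith [(abs_le.mp (bound y hy)).2]) hx
  have hneg_le := le_gronwallBound_of_deriv_le (f := -f) (K := K) (ε := ε) hf.neg
    (neg_le_abs (f a))
    (fun y hy => by
      simp only [deriv.neg', Pi.neg_apply]
      linarith [(abs_le.mp (bound y hy)).1]) hx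
  exact abs_le.mpr ⟨by linarith [Pi.neg_apply f x], hf_le⟩

theorem tendsto_gronwallBound_atTop {δ K ε : ℝ} (hK : K < 0) :
    Tendsto (gronwallBound δ K ε) atTop (𝓝 (-ε / K)) := by
  have hexp : Tendsto (fun x => exp (K * x)) atTop (𝓝 0) :=
    tendsto_exp_atBot.comp (tendsto_id.const_mul_atTop_of_neg hK)
  rw [gronwallBound_of_K_ne_0 hK.ne]
  convert (hexp.const_mul δ).add ((hexp.sub_const 1).const_mul (ε / K)) using 2
  ring

theorem stmt_1 (e d : ℝ → ℝ) (Kp ε : ℝ) (hKp : 0 < Kp)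
    (hdiff : Differentiable ℝ e)
    (hode : ∀ t : ℝ, 0 ≤ t → deriv e t + Kp * e t = d t)
    (hd : ∀ t : ℝ, |d t| ≤ ε) :
    Filter.limsup (fun t => |e t|) Filter.atTop ≤ ε / Kp := by
  have hbound : ∀ t, 0 ≤ t → |e t| ≤ gronwallBound |e 0| (-Kp) ε t := fun t ht => by
    simpa using abs_le_gronwallBound_of_abs_deriv_sub_le hdiff
      (fun s hs => by simpa [← hode s hs] using hd s) ht
  have hlim : Tendsto (gronwallBound |e 0| (-Kp) ε) atTop (𝓝 (ε / Kp)) := by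
    simpa [neg_div_neg_eq] using
      tendsto_gronwallBound_atTop (δ := |e 0|) (ε := ε) (neg_lt_zero.mpr hKp)
  calc limsup (fun t => |e t|) atTop
      ≤ limsup (gronwallBound |e 0| (-Kp) ε) atTop :=
        limsup_le_limsup (eventually_atTop.mpr ⟨0, hbound⟩)
          (isCoboundedUnder_le_of_le atTop fun t => abs_nonneg (e t)) hlim.isBoundedUnder_le
    _ = ε / Kp := hlim.limsup_eq
end

section
/- For any real constants F and α and any continuous u : ℝ → ℝ, if y satisfies y'(t) = F + α u(t), then for all t ≥ τ (τ > 0), F = -(6/τ³) ∫_{0}^{τ} [(τ - 2σ') y(t - τ + σ') + α σ'(τ - σ') u(t - τ + σ')] dσ'. -/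
theorem stmt_2 (F α τ : ℝ) (hτ : 0 < τ) (u y : ℝ → ℝ) (hu : Continuous u)
    (hy : ∀ t : ℝ, HasDerivAt y (F + α * u t) t) :
    ∀ t : ℝ, τ ≤ t →
      F = -(6 / τ ^ 3) *
        ∫ s in (0 : ℝ)..τ,
          ((τ - 2 * s) * y (t - τ + s) + α * s * (τ - s) * u (t - τ + s)) := by
  intro t ht
  have hyc : Continuous y :=
    continuous_iff_continuousAt.2 fun x => (hy x).continuousAt
  set c := t - τ with hc
  -- derivative of shifted y
  have hv : ∀ s : ℝ, HasDerivAt (fun s => y (c + s)) (F + α * u (c + s)) s := by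
    intro s
    have := (hy (c + s)).comp s ((hasDerivAt_id s).const_add c)
    simpa [Function.comp_def] using this
  have hg : ∀ s : ℝ, HasDerivAt (fun s => s * (τ - s)) (τ - 2 * s) s := by
    intro s
    have := (hasDerivAt_id s).mul ((hasDerivAt_const s τ).sub (hasDerivAt_id s))
    simp only [id] at this
    have h2 : HasDerivAt (fun s => s * (τ - s)) (1 * (τ - s) + s * (0 - 1)) s := this
    convert h2 using 1
    ring
  have hint1 : IntervalIntegrable (fun s => τ - 2 * s) MeasureTheory.volume 0 τ :=
    (by fun_prop : Continuous fun s : ℝ => τ - 2 * s).intervalIntegrable _ _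
  have hint2 : IntervalIntegrable (fun s => F + α * u (c + s)) MeasureTheory.volume 0 τ :=
    (by fun_prop : Continuous fun s : ℝ => F + α * u (c + s)).intervalIntegrable _ _
  have ibp := intervalIntegral.integral_mul_deriv_eq_deriv_mul
    (u := fun s => s * (τ - s)) (u' := fun s => τ - 2 * s)
    (v := fun s => y (c + s)) (v' := fun s => F + α * u (c + s))
    (fun x _ => hg x) (fun x _ => hv x) hint1 hint2
  -- ibp : ∫ s in 0..τ, (s*(τ-s)) * (F + α*u(c+s)) = τ*(τ-τ)*y(c+τ) - 0*(τ-0)*y(c+0)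
  --        - ∫ s in 0..τ, (τ - 2*s) * y (c+s)
  have hIy : (∫ s in (0:ℝ)..τ, (τ - 2 * s) * y (c + s))
      = - ∫ s in (0:ℝ)..τ, (s * (τ - s)) * (F + α * u (c + s)) := by
    rw [ibp]; ring
  have hsplit : (∫ s in (0:ℝ)..τ, ((τ - 2 * s) * y (c + s) + α * s * (τ - s) * u (c + s)))
      = (∫ s in (0:ℝ)..τ, (τ - 2 * s) * y (c + s))
        + ∫ s in (0:ℝ)..τ, α * s * (τ - s) * u (c + s) := by
    apply intervalIntegral.integral_add
    · exact (((by fun_prop : Continuous fun s : ℝ => τ - 2 * s).mul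
        (hyc.comp (by fun_prop))).intervalIntegrable _ _)
    · exact ((by fun_prop : Continuous fun s : ℝ =>
        α * s * (τ - s) * u (c + s)).intervalIntegrable _ _)
  have hsplit2 : (∫ s in (0:ℝ)..τ, (s * (τ - s)) * (F + α * u (c + s)))
      = (∫ s in (0:ℝ)..τ, F * (s * (τ - s)))
        + ∫ s in (0:ℝ)..τ, α * s * (τ - s) * u (c + s) := by
    rw [← intervalIntegral.integral_add
      ((by fun_prop : Continuous fun s : ℝ => F * (s * (τ - s))).intervalIntegrable _ _)
      ((by fun_prop : Continuous fun s : ℝ =>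
        α * s * (τ - s) * u (c + s)).intervalIntegrable _ _)]
    apply intervalIntegral.integral_congr
    intro s _
    ring
  have hpoly : (∫ s in (0:ℝ)..τ, F * (s * (τ - s))) = F * (τ ^ 3 / 6) := by
    have : (∫ s in (0:ℝ)..τ, F * (s * (τ - s)))
        = ∫ s in (0:ℝ)..τ, (F * τ) * s - F * s ^ 2 := by
      apply intervalIntegral.integral_congr
      intro s _; ring
    rw [this, intervalIntegral.integral_sub, intervalIntegral.integral_const_mul,
      intervalIntegral.integral_const_mul, integral_id, integral_pow]
    · ring
    · exact ((by fun_prop : Continuous fun s : ℝ => (F * τ) * s).intervalIntegrable _ _)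
    · exact ((by fun_prop : Continuous fun s : ℝ => F * s ^ 2).intervalIntegrable _ _)
  have hτ3 : τ ^ 3 ≠ 0 := pow_ne_zero _ (ne_of_gt hτ)
  have : (∫ s in (0:ℝ)..τ, ((τ - 2 * s) * y (c + s) + α * s * (τ - s) * u (c + s)))
      = - (F * (τ ^ 3 / 6)) := by
    rw [hsplit, hIy, hsplit2, hpoly]; ring
  have hfinal : (∫ s in (0:ℝ)..τ,
      ((τ - 2 * s) * y (t - τ + s) + α * s * (τ - s) * u (t - τ + s)))
      = - (F * (τ ^ 3 / 6)) := by rw [← hc]; exact this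
  rw [hfinal]
  field_simp
end

section
/- Let F be constant on the window: if y'(σ) = F + α u(σ) on [t-τ, t], then the functional F_est(t) defined by F_est(t) = -(6/τ³) ∫_0^τ [(τ - 2s) y(t-τ+s) + α s(τ-s) u(t-τ+s)] ds satisfies F_est(t) = F. In particular the estimator is exact and independent of the initial condition y(t-τ). -/
/-!
The weight `w s = s (τ - s)` vanishes at both ends of the window and `w' = τ - 2s`, so
integrating `(w · y(t - τ + ·))' = (τ - 2s) y + w (F + α u)` over `[0, τ]` gives zero: the
boundary terms, and with them `y (t - τ)`, disappear. Hence the `y`- and `u`-terms of the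
estimator add up to `-F ∫₀^τ w = -F τ³ / 6`.
-/

open Set intervalIntegral

open MeasureTheory (volume)

theorem integral_mul_sub_self (τ : ℝ) : ∫ s in (0 : ℝ)..τ, s * (τ - s) = τ ^ 3 / 6 := by
  have hderiv : ∀ s ∈ uIcc 0 τ,
      HasDerivAt (fun s : ℝ => τ * s ^ 2 / 2 - s ^ 3 / 3) (s * (τ - s)) s := fun s _ =>
    ((((hasDerivAt_pow 2 s).const_mul τ).div_const 2).sub
      ((hasDerivAt_pow 3 s).div_const 3)).congr_deriv (by push_cast; ring)
  rw [integral_eq_sub_of_hasDerivAt hderiv ((by fun_prop : Continuous _).intervalIntegrable _ _)]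
  ring

theorem intervalIntegrable_sub_two_mul_mul_add_mul {g g' : ℝ → ℝ} {τ : ℝ}
    (hg : ∀ s ∈ uIcc 0 τ, HasDerivAt g (g' s) s) (hg' : IntervalIntegrable g' volume 0 τ) :
    IntervalIntegrable (fun s => (τ - 2 * s) * g s + s * (τ - s) * g' s) volume 0 τ := by
  have hgc : ContinuousOn g (uIcc 0 τ) := fun s hs => (hg s hs).continuousAt.continuousWithinAt
  exact (hgc.intervalIntegrable.continuousOn_mul (by fun_prop)).add
    (hg'.continuousOn_mul (by fun_prop))

theorem integral_sub_two_mul_mul_add_mul_deriv_eq_zero {g g' : ℝ → ℝ} {τ : ℝ}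
    (hg : ∀ s ∈ uIcc 0 τ, HasDerivAt g (g' s) s) (hg' : IntervalIntegrable g' volume 0 τ) :
    ∫ s in (0 : ℝ)..τ, ((τ - 2 * s) * g s + s * (τ - s) * g' s) = 0 := by
  have hderiv : ∀ s ∈ uIcc 0 τ,
      HasDerivAt (fun s => s * (τ - s) * g s) ((τ - 2 * s) * g s + s * (τ - s) * g' s) s := by
    intro s hs
    have hw : HasDerivAt (fun s : ℝ => s * (τ - s)) (τ - 2 * s) s :=
      ((hasDerivAt_id' s).mul ((hasDerivAt_id' s).const_sub τ)).congr_deriv (by ring)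
    exact hw.mul (hg s hs)
  rw [integral_eq_sub_of_hasDerivAt hderiv (intervalIntegrable_sub_two_mul_mul_add_mul hg hg')]
  ring

theorem integral_sub_two_mul_mul_add_mul_eq {g v : ℝ → ℝ} {c τ : ℝ}
    (hg : ∀ s ∈ uIcc 0 τ, HasDerivAt g (c + v s) s) (hv : IntervalIntegrable v volume 0 τ) :
    ∫ s in (0 : ℝ)..τ, ((τ - 2 * s) * g s + s * (τ - s) * v s) = -(c * τ ^ 3 / 6) := by
  have hg' : IntervalIntegrable (fun s => c + v s) volume 0 τ := intervalIntegrable_const.add hv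
  calc ∫ s in (0 : ℝ)..τ, ((τ - 2 * s) * g s + s * (τ - s) * v s)
      = ∫ s in (0 : ℝ)..τ,
          (((τ - 2 * s) * g s + s * (τ - s) * (c + v s)) - c * (s * (τ - s))) := by
        congr 1; ext s; ring
    _ = -(c * τ ^ 3 / 6) := by
        rw [integral_sub (intervalIntegrable_sub_two_mul_mul_add_mul hg hg')
            ((by fun_prop : Continuous _).intervalIntegrable _ _),
          integral_sub_two_mul_mul_add_mul_deriv_eq_zero hg hg', integral_const_mul,
          integral_mul_sub_self]
        ring

theorem stmt_3_general (F α τ t : ℝ) (hτ : 0 < τ) (u y : ℝ → ℝ)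
    (hu : Continuous u)
    (hode : ∀ σ ∈ Set.Icc (t - τ) t, HasDerivAt y (F + α * u σ) σ) :
    -(6 / τ ^ 3) *
        ∫ s in (0 : ℝ)..τ,
          ((τ - 2 * s) * y (t - τ + s) + α * s * (τ - s) * u (t - τ + s)) = F := by
  have hwindow : ∀ s ∈ uIcc 0 τ,
      HasDerivAt (fun s => y (t - τ + s)) (F + α * u (t - τ + s)) s := by
    intro s hs
    rw [uIcc_of_le hτ.le] at hs
    have hσ : t - τ + s ∈ Icc (t - τ) t := ⟨by linarith [hs.1], by linarith [hs.2]⟩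
    simpa using (hode _ hσ).comp_const_add (t - τ) s
  have hestimate := integral_sub_two_mul_mul_add_mul_eq hwindow
    ((by fun_prop : Continuous fun s => α * u (t - τ + s)).intervalIntegrable _ _)
  calc -(6 / τ ^ 3) * ∫ s in (0 : ℝ)..τ,
          ((τ - 2 * s) * y (t - τ + s) + α * s * (τ - s) * u (t - τ + s))
      = -(6 / τ ^ 3) * -(F * τ ^ 3 / 6) := by
        rw [← hestimate]; congr 2; ext s; ring
    _ = F := by field_simp

theorem stmt_3 (F α τ t : ℝ) (hτ : 0 < τ) (u y : ℝ → ℝ)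
    (hu : Continuous u) (hy : ContDiff ℝ 1 y)
    (hode : ∀ σ ∈ Set.Icc (t - τ) t, HasDerivAt y (F + α * u σ) σ) :
    -(6 / τ ^ 3) *
        ∫ s in (0 : ℝ)..τ,
          ((τ - 2 * s) * y (t - τ + s) + α * s * (τ - s) * u (t - τ + s)) = F :=
  stmt_3_general F α τ t hτ u y hu hode
end
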